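/- arXiv:1401.2772 — 2 statements merged into one kernel-verified Lean document; each statement's English description precedes it below -/
import Mathlib

section
/- Let p ≥ 2 and let a, b ∈ ℝⁿ. Then 2^{2−p} |a − b|^p ≤ ( |a|^{p−2} a − |b|^{p−2} b ) · (a − b), where · denotes the Euclidean inner product and |·| the Euclidean norm. -/
open Real
open scoped RealInnerProductSpace

/-!
With `q = p - 2`, `A = ‖a‖`, `B = ‖b‖`, `D = ‖a - b‖`, the polarization identity
`2 ⟪s • a - t • b, a - b⟫ = (s - t) (A² - B²) + (s + t) D²` reduces the claim to the scalar
inequality `2^{1-q} D^{q+2} ≤ (A^q - B^q)(A² - B²) + (A^q + B^q) D²` for `0 ≤ D ≤ A + B`.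
The first term on the right is nonnegative, and `D ↦ D² (2^{1-q} D^q - A^q - B^q)` is increasing
where it is positive, so the worst case is `D = A + B`; there the inequality is the power-mean
bound `(A + B)^{q+1} ≤ 2^q (A^{q+1} + B^{q+1})`.
-/

theorem Real.rpow_add_le_mul_rpow_add_rpow {a b r : ℝ} (ha : 0 ≤ a) (hb : 0 ≤ b) (hr : 1 ≤ r) :
    (a + b) ^ r ≤ 2 ^ (r - 1) * (a ^ r + b ^ r) := by
  exact_mod_cast NNReal.rpow_add_le_mul_rpow_add_rpow ⟨a, ha⟩ ⟨b, hb⟩ hr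

theorem two_mul_inner_smul_sub_smul {E : Type*} [NormedAddCommGroup E] [InnerProductSpace ℝ E]
    (s t : ℝ) (a b : E) :
    2 * ⟪s • a - t • b, a - b⟫ = (s - t) * (‖a‖ ^ 2 - ‖b‖ ^ 2) + (s + t) * ‖a - b‖ ^ 2 := by
  simp only [norm_sub_sq_real, inner_sub_left, inner_sub_right, real_inner_smul_left,
    real_inner_self_eq_norm_sq, real_inner_comm a b]
  ring

theorem rpow_sub_rpow_mul_sq_sub_sq_nonneg {q A B : ℝ} (hq : 0 ≤ q) (hA : 0 ≤ A) (hB : 0 ≤ B) :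
    0 ≤ (A ^ q - B ^ q) * (A ^ 2 - B ^ 2) := by
  rcases le_total B A with hBA | hAB
  · exact mul_nonneg (sub_nonneg.2 (rpow_le_rpow hB hBA hq))
      (sub_nonneg.2 (pow_le_pow_left₀ hB hBA 2))
  · exact mul_nonneg_of_nonpos_of_nonpos (sub_nonpos.2 (rpow_le_rpow hA hAB hq))
      (sub_nonpos.2 (pow_le_pow_left₀ hA hAB 2))

theorem two_rpow_mul_add_rpow_le {q A B : ℝ} (hq : 0 ≤ q) (hA : 0 ≤ A) (hB : 0 ≤ B) :
    2 ^ (1 - q) * (A + B) ^ (q + 2) ≤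
      (A ^ q - B ^ q) * (A ^ 2 - B ^ 2) + (A ^ q + B ^ q) * (A + B) ^ 2 := by
  have hS : 0 ≤ A + B := add_nonneg hA hB
  have hsucc {x : ℝ} (hx : 0 ≤ x) : x ^ (q + 1) = x ^ q * x := by
    rw [rpow_add' hx (by linarith), rpow_one]
  have hconv : (A + B) ^ (q + 1) ≤ 2 ^ q * (A ^ (q + 1) + B ^ (q + 1)) := by
    simpa using Real.rpow_add_le_mul_rpow_add_rpow hA hB (r := q + 1) (by linarith)
  have htwo : (2 : ℝ) ^ (1 - q) * 2 ^ q = 2 := by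
    rw [← rpow_add two_pos]; norm_num
  calc 2 ^ (1 - q) * (A + B) ^ (q + 2) = 2 ^ (1 - q) * (A + B) * (A + B) ^ (q + 1) := by
        rw [show q + 2 = q + 1 + 1 by ring, rpow_add' hS (by linarith), rpow_one]
        ring
    _ ≤ 2 ^ (1 - q) * (A + B) * (2 ^ q * (A ^ (q + 1) + B ^ (q + 1))) := by gcongr
    _ = _ := by rw [hsucc hA, hsucc hB]; linear_combination (A + B) * (A ^ q * A + B ^ q * B) * htwo

theorem two_rpow_mul_rpow_le {q A B D : ℝ} (hq : 0 ≤ q) (hA : 0 ≤ A) (hB : 0 ≤ B) (hD : 0 ≤ D)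
    (hDAB : D ≤ A + B) :
    2 ^ (1 - q) * D ^ (q + 2) ≤ (A ^ q - B ^ q) * (A ^ 2 - B ^ 2) + (A ^ q + B ^ q) * D ^ 2 := by
  have hsplit {x : ℝ} (hx : 0 ≤ x) : x ^ (q + 2) = x ^ q * x ^ 2 := by
    rw [rpow_add' hx (by linarith), rpow_two]
  rcases le_or_gt (2 ^ (1 - q) * D ^ q) (A ^ q + B ^ q) with hsmall | hlarge
  · calc 2 ^ (1 - q) * D ^ (q + 2) = 2 ^ (1 - q) * D ^ q * D ^ 2 := by rw [hsplit hD]; ring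
      _ ≤ (A ^ q + B ^ q) * D ^ 2 := by gcongr
      _ ≤ _ := le_add_of_nonneg_left (rpow_sub_rpow_mul_sq_sub_sq_nonneg hq hA hB)
  · have hmono : D ^ 2 * (2 ^ (1 - q) * D ^ q - (A ^ q + B ^ q)) ≤
        (A + B) ^ 2 * (2 ^ (1 - q) * (A + B) ^ q - (A ^ q + B ^ q)) :=
      mul_le_mul (pow_le_pow_left₀ hD hDAB 2) (by gcongr) (by linarith) (by positivity)
    have hend := two_rpow_mul_add_rpow_le hq hA hB
    rw [hsplit (add_nonneg hA hB)] at hend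
    rw [hsplit hD]
    linear_combination hmono + hend

/-- Strong monotonicity of the map `a ↦ |a|^{p−2} a` on `ℝⁿ` for `p ≥ 2`:
`2^{2−p} |a − b|^p ≤ (|a|^{p−2} a − |b|^{p−2} b) · (a − b)`. -/
theorem strong_monotonicity (n : ℕ) (p : ℝ) (hp : 2 ≤ p)
    (a b : EuclideanSpace ℝ (Fin n)) :
    (2 : ℝ) ^ (2 - p) * ‖a - b‖ ^ p ≤ ⟪‖a‖ ^ (p - 2) • a - ‖b‖ ^ (p - 2) • b, a - b⟫ := by
  have key := two_rpow_mul_rpow_le (sub_nonneg.2 hp) (norm_nonneg a) (norm_nonneg b)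
    (norm_nonneg (a - b)) (norm_sub_le a b)
  have htwo : (2 : ℝ) ^ (1 - (p - 2)) = 2 * 2 ^ (2 - p) := by
    rw [show 1 - (p - 2) = 1 + (2 - p) by ring, rpow_add two_pos, rpow_one]
  rw [sub_add_cancel, htwo, ← two_mul_inner_smul_sub_smul] at key
  linarith
end

section
/- Let n ≥ 1, p > 2, λ = n(p−2)+p, C > 0 and T > 0, and let B_p be the Barenblatt solution. Then the integrability exponents p − 1 + p/n and p − 1 + 1/(n+1) are sharp: for every q ≥ p − 1 + p/n, ∫_0^T ∫_{ℝⁿ} B_p(x,t)^q dx dt = ∞, and for every q ≥ p − 1 + 1/(n+1), ∫_0^T ∫_{ℝⁿ} |∇_x B_p(x,t)|^q dx dt = ∞. -/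
/-!
The Barenblatt solution is self-similar: `B_p(x,t) = t^{-n/λ} F(t^{-1/λ} x)` for a profile
`F(y) = (C - K |y|^s)_+^m`. Rescaling the space variable turns the spatial integrals into
`∫ B_p^q dx = t^{(n - nq)/λ} ∫ F^q` and `∫ |∇B_p|^q dx = t^{(n - (n+1)q)/λ} ∫ |∇F|^q`, and both
integrals of `F` are positive: `F > 0` near the origin, and `∇F ≠ 0` on a punctured neighbourhood
of it. What remains is `∫_0^T t^a dt`, which diverges exactly when `a ≤ -1`; for the two powers of
`t` above this is `q ≥ p - 1 + p/n`, resp. `q ≥ p - 1 + 1/(n+1)`.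
-/

open MeasureTheory Real Set
open scoped ENNReal

/-- The Barenblatt solution of the `p`-parabolic equation with constant `C`:
`B_p(x,t) = t^{-n/λ} (C - ((p-2)/2) λ^{1/(1-p)} (|x| t^{-1/λ})^{p/(p-1)})_+^{(p-1)/(p-2)}`,
where `λ = n(p-2)+p`. -/
noncomputable def barenblatt (n : ℕ) (p C : ℝ) (x : EuclideanSpace ℝ (Fin n)) (t : ℝ) : ℝ :=
  t ^ (-(n : ℝ) / ((n : ℝ) * (p - 2) + p)) *
    (max (C - (p - 2) / 2 * ((n : ℝ) * (p - 2) + p) ^ (1 / (1 - p)) *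
      (‖x‖ / t ^ (1 / ((n : ℝ) * (p - 2) + p))) ^ (p / (p - 1))) 0) ^ ((p - 1) / (p - 2))

theorem lintegral_Ioo_rpow_mul_eq_top {a T : ℝ} (ha : a ≤ -1) (hT : 0 < T) {c : ℝ≥0∞}
    (hc : c ≠ 0) : ∫⁻ t in Ioo 0 T, ENNReal.ofReal (t ^ a) * c = ⊤ := by
  have hint : ¬IntegrableOn (fun t : ℝ => t ^ a) (Ioo 0 T) := by
    rw [intervalIntegral.integrableOn_Ioo_rpow_iff hT]; linarith
  have htop : ∫⁻ t in Ioo 0 T, ENNReal.ofReal (t ^ a) = ⊤ := by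
    by_contra h
    refine hint ((lintegral_ofReal_ne_top_iff_integrable ?_ ?_).1 h)
    · exact (measurable_id.pow_const a).aestronglyMeasurable
    · exact (ae_restrict_iff' measurableSet_Ioo).2 (.of_forall fun t ht => rpow_nonneg ht.1.le a)
  rw [lintegral_mul_const _ (by fun_prop), htop, ENNReal.top_mul hc]

theorem lintegral_ofReal_ne_zero_of_pos_on_isOpen {E : Type*} [TopologicalSpace E]
    [MeasurableSpace E] (μ : Measure E) [μ.IsOpenPosMeasure] {f : E → ℝ} (hf : Measurable f)
    {U : Set E} (hU : IsOpen U) (hUne : U.Nonempty) (hpos : ∀ x ∈ U, 0 < f x) :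
    ∫⁻ x, ENNReal.ofReal (f x) ∂μ ≠ 0 :=
  ((lintegral_pos_iff_support hf.ennreal_ofReal).2 ((hU.measure_pos μ hUne).trans_le
    (measure_mono fun x hx => (ENNReal.ofReal_pos.2 (hpos x hx)).ne'))).ne'

theorem norm_gradient_const_mul_comp_smul {E : Type*} [NormedAddCommGroup E]
    [InnerProductSpace ℝ E] [CompleteSpace E] (g : E → ℝ) (a c : ℝ) (x : E) :
    ‖gradient (fun y => a * g (c • y)) x‖ = |a| * |c| * ‖fderiv ℝ g (c • x)‖ := by
  have hnorm : ∀ (f : E → ℝ) y, ‖gradient f y‖ = ‖fderiv ℝ f y‖ := fun f y => by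
    rw [← toDual_gradient, LinearIsometryEquiv.norm_map]
  rw [hnorm]
  change ‖fderiv ℝ (a • fun y => g (c • y)) x‖ = _
  rw [fderiv_const_smul_field, Pi.smul_apply, fderiv_comp_smul, norm_smul, norm_smul,
    Real.norm_eq_abs, Real.norm_eq_abs, mul_assoc]

section SelfSimilar

open Module

variable {E : Type*} [NormedAddCommGroup E] [NormedSpace ℝ E] [FiniteDimensional ℝ E]
  [MeasurableSpace E] [BorelSpace E] (μ : Measure E) [μ.IsAddHaarMeasure]

theorem lintegral_comp_inv_smul (f : E → ℝ≥0∞) {σ : ℝ} (hσ : 0 < σ) :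
    ∫⁻ x, f (σ⁻¹ • x) ∂μ = ENNReal.ofReal (σ ^ finrank ℝ E) * ∫⁻ x, f x ∂μ := by
  have hσ' : σ⁻¹ ≠ 0 := inv_ne_zero hσ.ne'
  calc ∫⁻ x, f (σ⁻¹ • x) ∂μ = ∫⁻ x, f x ∂(μ.map (σ⁻¹ • ·)) :=
        (lintegral_map_equiv f (MeasurableEquiv.smul₀ σ⁻¹ hσ')).symm
    _ = _ := by
      rw [Measure.map_addHaar_smul μ hσ', lintegral_smul_measure, inv_pow, inv_inv,
        abs_of_pos (pow_pos hσ _), smul_eq_mul]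

theorem lintegral_ofReal_mul_comp_inv_smul (f : E → ℝ) {c σ : ℝ} (hc : 0 ≤ c) (hσ : 0 < σ) :
    ∫⁻ x, ENNReal.ofReal (c * f (σ⁻¹ • x)) ∂μ =
      ENNReal.ofReal (c * σ ^ finrank ℝ E) * ∫⁻ x, ENNReal.ofReal (f x) ∂μ := by
  simp_rw [ENNReal.ofReal_mul hc]
  rw [lintegral_const_mul' _ _ ENNReal.ofReal_ne_top,
    lintegral_comp_inv_smul μ (fun y => ENNReal.ofReal (f y)) hσ, mul_assoc]

theorem lintegral_Ioo_lintegral_rpow_eq_top_of_selfSimilar {u : ℝ → E → ℝ} {g : E → ℝ}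
    {A b T : ℝ} (hu : ∀ t ∈ Ioo 0 T, u t = fun x => t ^ A * g ((t ^ b)⁻¹ • x))
    (hg : ∀ y, 0 ≤ g y) {q : ℝ} (hI : ∫⁻ y, ENNReal.ofReal (g y ^ q) ∂μ ≠ 0) (hT : 0 < T)
    (he : A * q + b * finrank ℝ E ≤ -1) :
    ∫⁻ t in Ioo 0 T, ∫⁻ x, ENNReal.ofReal (u t x ^ q) ∂μ = ⊤ := by
  have hscale : ∀ t ∈ Ioo 0 T, ∫⁻ x, ENNReal.ofReal (u t x ^ q) ∂μ =
      ENNReal.ofReal (t ^ (A * q + b * finrank ℝ E)) * ∫⁻ y, ENNReal.ofReal (g y ^ q) ∂μ := by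
    intro t ht
    rw [hu t ht]
    replace ht := ht.1
    simp_rw [mul_rpow (rpow_nonneg ht.le A) (hg _)]
    rw [lintegral_ofReal_mul_comp_inv_smul μ (fun y => g y ^ q) (by positivity)
      (rpow_pos_of_pos ht b), ← rpow_mul ht.le, ← rpow_mul_natCast ht.le, ← rpow_add ht]
  rw [setLIntegral_congr_fun measurableSet_Ioo hscale]
  exact lintegral_Ioo_rpow_mul_eq_top he hT hI

end SelfSimilar

open Module in
theorem lintegral_Ioo_lintegral_norm_gradient_rpow_eq_top_of_selfSimilar {E : Type*}
    [NormedAddCommGroup E] [InnerProductSpace ℝ E] [FiniteDimensional ℝ E] [MeasurableSpace E]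
    [BorelSpace E] (μ : Measure E) [μ.IsAddHaarMeasure] {u : ℝ → E → ℝ} {g : E → ℝ}
    {A b T : ℝ} (hu : ∀ t ∈ Ioo 0 T, u t = fun x => t ^ A * g ((t ^ b)⁻¹ • x))
    {q : ℝ} (hI : ∫⁻ y, ENNReal.ofReal (‖fderiv ℝ g y‖ ^ q) ∂μ ≠ 0) (hT : 0 < T)
    (he : (A - b) * q + b * finrank ℝ E ≤ -1) :
    ∫⁻ t in Ioo 0 T, ∫⁻ x, ENNReal.ofReal (‖gradient (u t) x‖ ^ q) ∂μ = ⊤ := by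
  have hscale : ∀ t ∈ Ioo 0 T, ∫⁻ x, ENNReal.ofReal (‖gradient (u t) x‖ ^ q) ∂μ =
      ENNReal.ofReal (t ^ ((A - b) * q + b * finrank ℝ E)) *
        ∫⁻ y, ENNReal.ofReal (‖fderiv ℝ g y‖ ^ q) ∂μ := by
    intro t ht
    rw [hu t ht]
    replace ht := ht.1
    have htb := rpow_pos_of_pos ht b
    have hc : 0 ≤ |t ^ A| * |(t ^ b)⁻¹| := by positivity
    simp_rw [norm_gradient_const_mul_comp_smul, mul_rpow hc (norm_nonneg _)]
    rw [lintegral_ofReal_mul_comp_inv_smul μ (fun y => ‖fderiv ℝ g y‖ ^ q) (by positivity) htb,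
      abs_of_pos (rpow_pos_of_pos ht A), abs_of_pos (inv_pos.2 htb), ← rpow_neg ht.le,
      ← rpow_add ht, ← sub_eq_add_neg, ← rpow_mul ht.le, ← rpow_mul_natCast ht.le, ← rpow_add ht]
  rw [setLIntegral_congr_fun measurableSet_Ioo hscale]
  exact lintegral_Ioo_rpow_mul_eq_top he hT hI

section Profile

variable {E : Type*} [NormedAddCommGroup E]

noncomputable def barenblattProfile (C K s m : ℝ) (y : E) : ℝ :=
  max (C - K * ‖y‖ ^ s) 0 ^ m

variable {C K s m : ℝ}

theorem barenblattProfile_nonneg (y : E) : 0 ≤ barenblattProfile C K s m y :=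
  rpow_nonneg (le_max_right _ _) m

theorem barenblattProfile_pos {y : E} (hy : K * ‖y‖ ^ s < C) :
    0 < barenblattProfile C K s m y :=
  rpow_pos_of_pos (lt_max_of_lt_left (sub_pos.2 hy)) m

theorem measurable_barenblattProfile [MeasurableSpace E] [OpensMeasurableSpace E] :
    Measurable (barenblattProfile (E := E) C K s m) := by
  unfold barenblattProfile; fun_prop

theorem isOpen_setOf_mul_norm_rpow_lt (C K : ℝ) (hs : 0 ≤ s) :
    IsOpen {y : E | K * ‖y‖ ^ s < C} :=
  isOpen_lt (continuous_const.mul (continuous_norm.rpow_const fun _ => Or.inr hs))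
    continuous_const

theorem hasFDerivAt_barenblattProfile [InnerProductSpace ℝ E] (hs : 1 < s) {y : E}
    (hy : K * ‖y‖ ^ s < C) :
    HasFDerivAt (barenblattProfile C K s m)
      ((-(K * m * (C - K * ‖y‖ ^ s) ^ (m - 1))) • (s * ‖y‖ ^ (s - 2)) • innerSL ℝ y) y := by
  have hlocal : barenblattProfile C K s m =ᶠ[nhds y] fun z => (C - K * ‖z‖ ^ s) ^ m := by
    filter_upwards [(isOpen_setOf_mul_norm_rpow_lt C K (by linarith)).mem_nhds hy] with z hz
    rw [barenblattProfile, max_eq_left (sub_pos.2 hz).le]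
  have hG : HasDerivAt (fun u : ℝ => (C - K * u) ^ m)
      (-(K * m * (C - K * ‖y‖ ^ s) ^ (m - 1))) (‖y‖ ^ s) := by
    have := (((hasDerivAt_id (‖y‖ ^ s)).const_mul K).const_sub C).rpow_const (p := m)
      (Or.inl (sub_pos.2 hy).ne')
    simp only [id, mul_one] at this
    convert this using 1
    ring
  exact (hG.comp_hasFDerivAt y (hasFDerivAt_norm_rpow y hs) :).congr_of_eventuallyEq hlocal

theorem fderiv_barenblattProfile_ne_zero [InnerProductSpace ℝ E] (hK : K ≠ 0) (hm : m ≠ 0)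
    (hs : 1 < s) {y : E} (hy0 : y ≠ 0) (hy : K * ‖y‖ ^ s < C) :
    fderiv ℝ (barenblattProfile C K s m) y ≠ 0 := by
  have hy0' : 0 < ‖y‖ := norm_pos_iff.2 hy0
  rw [(hasFDerivAt_barenblattProfile hs hy).fderiv]
  refine smul_ne_zero (neg_ne_zero.2 (mul_ne_zero (mul_ne_zero hK hm) ?_))
    (smul_ne_zero (mul_ne_zero (by linarith) ?_) ?_)
  · exact (rpow_pos_of_pos (sub_pos.2 hy) _).ne'
  · exact (rpow_pos_of_pos hy0' _).ne'
  · rw [← norm_ne_zero_iff, innerSL_apply_norm]; exact hy0'.ne'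

variable [MeasurableSpace E] [OpensMeasurableSpace E] (μ : Measure E) [μ.IsOpenPosMeasure]

theorem lintegral_barenblattProfile_rpow_ne_zero (hC : 0 < C) (hs : 0 < s) (q : ℝ) :
    ∫⁻ y, ENNReal.ofReal (barenblattProfile C K s m y ^ q) ∂μ ≠ 0 :=
  lintegral_ofReal_ne_zero_of_pos_on_isOpen μ (measurable_barenblattProfile.pow_const q)
    (isOpen_setOf_mul_norm_rpow_lt C K hs.le) ⟨0, by simpa [zero_rpow hs.ne'] using hC⟩
    fun _ hy => rpow_pos_of_pos (barenblattProfile_pos hy) q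

theorem lintegral_norm_fderiv_barenblattProfile_rpow_ne_zero [InnerProductSpace ℝ E]
    [Nontrivial E] (hC : 0 < C) (hK : K ≠ 0) (hm : m ≠ 0) (hs : 1 < s) (q : ℝ) :
    ∫⁻ y, ENNReal.ofReal (‖fderiv ℝ (barenblattProfile C K s m) y‖ ^ q) ∂μ ≠ 0 := by
  have hU : IsOpen {y : E | K * ‖y‖ ^ s < C} := isOpen_setOf_mul_norm_rpow_lt C K (by linarith)
  have h0 : (0 : E) ∈ {y : E | K * ‖y‖ ^ s < C} := by
    simpa [zero_rpow (by linarith : s ≠ 0)] using hC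
  have hne : ({y : E | K * ‖y‖ ^ s < C} ∩ {0}ᶜ).Nonempty :=
    Filter.nonempty_of_mem (f := nhdsWithin (0 : E) {0}ᶜ)
      (Filter.inter_mem (mem_nhdsWithin_of_mem_nhds (hU.mem_nhds h0)) self_mem_nhdsWithin)
  refine lintegral_ofReal_ne_zero_of_pos_on_isOpen μ
    ((measurable_fderiv ℝ _).norm.pow_const q) (hU.inter isOpen_compl_singleton) hne
    fun y ⟨hy, hy0⟩ => rpow_pos_of_pos (norm_pos_iff.2 ?_) q
  exact fderiv_barenblattProfile_ne_zero hK hm hs hy0 hy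

end Profile

theorem barenblatt_eq_mul_barenblattProfile {n : ℕ} {p C t : ℝ} (ht : 0 < t)
    (x : EuclideanSpace ℝ (Fin n)) :
    barenblatt n p C x t = t ^ (-(n : ℝ) / ((n : ℝ) * (p - 2) + p)) *
      barenblattProfile C ((p - 2) / 2 * ((n : ℝ) * (p - 2) + p) ^ (1 / (1 - p))) (p / (p - 1))
        ((p - 1) / (p - 2)) ((t ^ (1 / ((n : ℝ) * (p - 2) + p)))⁻¹ • x) := by
  rw [barenblatt, barenblattProfile, norm_smul, norm_inv,
    norm_of_nonneg (rpow_pos_of_pos ht _).le, inv_mul_eq_div, mul_assoc]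

theorem barenblatt_exponent_le {n p q : ℝ} (hn : 0 < n) (hL : 0 < n * (p - 2) + p)
    (hq : p - 1 + p / n ≤ q) :
    -n / (n * (p - 2) + p) * q + 1 / (n * (p - 2) + p) * n ≤ -1 := by
  have hnq := mul_le_mul_of_nonneg_left hq hn.le
  rw [mul_add, mul_div_cancel₀ _ hn.ne'] at hnq
  rw [show -n / _ * q + 1 / _ * n = -((n * q - n) / (n * (p - 2) + p)) by ring,
    neg_le_neg_iff, one_le_div hL]
  linarith

theorem barenblatt_gradient_exponent_le {n p q : ℝ} (hn : 0 ≤ n) (hL : 0 < n * (p - 2) + p)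
    (hq : p - 1 + 1 / (n + 1) ≤ q) :
    (-n / (n * (p - 2) + p) - 1 / (n * (p - 2) + p)) * q + 1 / (n * (p - 2) + p) * n ≤ -1 := by
  have hnq := mul_le_mul_of_nonneg_left hq (by positivity : 0 ≤ n + 1)
  rw [mul_add, mul_one_div_cancel (by positivity)] at hnq
  rw [show (-n / _ - 1 / _) * q + 1 / _ * n = -(((n + 1) * q - n) / (n * (p - 2) + p)) by ring,
    neg_le_neg_iff, one_le_div hL]
  linarith

/-- Sharpness of the integrability exponents: for every `q ≥ p − 1 + p/n` the integral
`∫_0^T ∫_{ℝⁿ} B_p^q dx dt` is infinite, and for every `q ≥ p − 1 + 1/(n+1)` the integral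
`∫_0^T ∫_{ℝⁿ} |∇_x B_p|^q dx dt` is infinite. -/
theorem barenblatt_exponents_sharp (n : ℕ) (hn : 1 ≤ n) (p : ℝ) (hp : 2 < p)
    (C : ℝ) (hC : 0 < C) (T : ℝ) (hT : 0 < T) :
    (∀ q : ℝ, p - 1 + p / n ≤ q →
      ∫⁻ t in Set.Ioo (0 : ℝ) T, ∫⁻ x,
        ENNReal.ofReal (barenblatt n p C x t ^ q) = ⊤) ∧
    (∀ q : ℝ, p - 1 + 1 / (n + 1) ≤ q →
      ∫⁻ t in Set.Ioo (0 : ℝ) T, ∫⁻ x,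
        ENNReal.ofReal (‖gradient (fun y => barenblatt n p C y t) x‖ ^ q) = ⊤) := by
  have hn' : (0 : ℝ) < n := by exact_mod_cast hn
  have hL : 0 < (n : ℝ) * (p - 2) + p := by nlinarith
  have hK : 0 < (p - 2) / 2 * ((n : ℝ) * (p - 2) + p) ^ (1 / (1 - p)) :=
    mul_pos (by linarith) (rpow_pos_of_pos hL _)
  have hs : 1 < p / (p - 1) := (one_lt_div (by linarith)).2 (by linarith)
  have hm : (p - 1) / (p - 2) ≠ 0 := (div_pos (by linarith) (by linarith)).ne'
  have : NeZero n := ⟨by omega⟩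
  have hself := fun t (ht : t ∈ Ioo 0 T) =>
    funext (barenblatt_eq_mul_barenblattProfile (n := n) (p := p) (C := C) ht.1)
  refine ⟨fun q hq => ?_, fun q hq => ?_⟩
  · refine lintegral_Ioo_lintegral_rpow_eq_top_of_selfSimilar volume
      (u := fun t x => barenblatt n p C x t) hself barenblattProfile_nonneg
      (lintegral_barenblattProfile_rpow_ne_zero volume hC (by linarith) q) hT ?_
    rw [finrank_euclideanSpace_fin]
    exact barenblatt_exponent_le hn' hL hq
  · refine lintegral_Ioo_lintegral_norm_gradient_rpow_eq_top_of_selfSimilar volume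
      (u := fun t x => barenblatt n p C x t) hself
      (lintegral_norm_fderiv_barenblattProfile_rpow_ne_zero volume hC hK.ne' hm hs q) hT ?_
    rw [finrank_euclideanSpace_fin]
    exact barenblatt_gradient_exponent_le hn'.le hL hq
end
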